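/- arXiv:1212.2795 — 3 statements merged into one kernel-verified Lean document; each statement's English description precedes it below -/
import Mathlib

section
/- (Motzkin–Straus) If $G$ is a 2-uniform graph (simple graph) in which a largest clique has order $l$, then $\lambda(G) = \lambda(K^{(2)}_l) = \frac{1}{2}\left(1 - \frac{1}{l}\right)$. -/
open Finset

/-- Weightings on vertex set `[n] = {1,…,n}`: nonnegative, summing to 1, zero outside `[n]`. -/
def simplexOn (n : ℕ) (x : ℕ → ℝ) : Prop :=
  (∀ i, 0 ≤ x i) ∧ (∑ i ∈ Finset.Icc 1 n, x i = 1) ∧ ∀ i, i ∉ Finset.Icc 1 n → x i = 0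

/-- `λ(F, x) = ∑_{e ∈ F} ∏_{i ∈ e} x i` for a family of finite sets `F`. -/
def lagF (E : Finset (Finset ℕ)) (x : ℕ → ℝ) : ℝ := ∑ e ∈ E, ∏ i ∈ e, x i

/-- The Lagrangian of the hypergraph with edge set `E` on vertex set `[n]`. -/
noncomputable def lagr (n : ℕ) (E : Finset (Finset ℕ)) : ℝ :=
  sSup {v : ℝ | ∃ x : ℕ → ℝ, simplexOn n x ∧ v = lagF E x}

/-- `E` is the edge set of an `r`-uniform hypergraph on vertex set `[n]`. -/
def isRGraph (r n : ℕ) (E : Finset (Finset ℕ)) : Prop :=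
  ∀ e ∈ E, e.card = r ∧ e ⊆ Finset.Icc 1 n

/-- The complete `r`-graph `[l]^(r)`: all `r`-subsets of `[l]`. -/
def completeR (r l : ℕ) : Finset (Finset ℕ) := (Finset.Icc 1 l).powersetCard r

/-- The link `E_i` of vertex `i`. -/
def link (E : Finset (Finset ℕ)) (i : ℕ) : Finset (Finset ℕ) :=
  (E.filter fun e => i ∈ e).image fun e => e.erase i

/-- The pair link `E_{ij}`. -/
def link2 (E : Finset (Finset ℕ)) (i j : ℕ) : Finset (Finset ℕ) :=
  (E.filter fun e => i ∈ e ∧ j ∈ e).image fun e => (e.erase i).erase j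

/-- `E_{i \ j} = E_i ∩ E_j^c`. -/
def linkDiff (E : Finset (Finset ℕ)) (i j : ℕ) : Finset (Finset ℕ) :=
  (link E i).filter fun A => insert j A ∉ E

/-- `A` dominates `B` from below: same size and the `k`-th smallest element of `A`
is at most the `k`-th smallest element of `B`, for every `k`. -/
def domBelow (A B : Finset ℕ) : Prop :=
  A.card = B.card ∧ ∀ k, (Finset.sort A (· ≤ ·)).getD k 0 ≤ (Finset.sort B (· ≤ ·)).getD k 0

/-- `E` is left-compressed. -/
def leftCompressed (E : Finset (Finset ℕ)) : Prop :=
  ∀ B ∈ E, ∀ A : Finset ℕ, (∀ a ∈ A, 1 ≤ a) → domBelow A B → A ∈ E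

/-- The vertex set `T` spans a clique in the `r`-graph `E`. -/
def hasCliqueOn (E : Finset (Finset ℕ)) (r : ℕ) (T : Finset ℕ) : Prop :=
  ∀ e ⊆ T, e.card = r → e ∈ E

/-- `x` is an optimal weighting for the `r`-graph `E` on `[n]`. -/
def isOptimal (n : ℕ) (E : Finset (Finset ℕ)) (x : ℕ → ℝ) : Prop :=
  simplexOn n x ∧ lagF E x = lagr n E

/-- Number of nonzero weights. -/
noncomputable def suppCard (n : ℕ) (x : ℕ → ℝ) : ℕ := ((Finset.Icc 1 n).filter fun i => x i ≠ 0).card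

/-- A minimal optimal weighting: optimal, and any weighting with fewer nonzero
weights has strictly smaller Lagrangian value. -/
def isMinOptimal (n : ℕ) (E : Finset (Finset ℕ)) (x : ℕ → ℝ) : Prop :=
  isOptimal n E x ∧
    ∀ y : ℕ → ℝ, simplexOn n y → suppCard n y < suppCard n x → lagF E y < lagr n E

/-!
The uniform weighting of a largest clique gives `λ ≥ (1 - 1/l)/2`. For the upper bound take any
weighting `x`. If two vertices `i, j` of its support are non-adjacent, no edge meets both, so
moving all of `x j` onto `i` changes `λ(E, x)` by `x j` times the difference of the link
weights of `i` and `j`; in one of the two directions this does not decrease `λ` and it shrinks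
the support. Once the support `S` is a clique, `λ(E, x) ≤ ((∑ x)² - ∑ x²)/2 ≤ (1 - 1/|S|)/2` by
Cauchy–Schwarz, and `|S| ≤ l`.
-/

section Lagrangian

variable {E : Finset (Finset ℕ)} {x y : ℕ → ℝ}

lemma lagF_congr (h : ∀ e ∈ E, ∀ k ∈ e, x k = y k) : lagF E x = lagF E y :=
  sum_congr rfl fun e he => prod_congr rfl (h e he)

lemma lagF_mono {F : Finset (Finset ℕ)} (hEF : E ⊆ F) (hx : ∀ k, 0 ≤ x k) :
    lagF E x ≤ lagF F x :=
  sum_le_sum_of_subset_of_nonneg hEF fun _ _ _ => prod_nonneg fun k _ => hx k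

lemma lagF_filter_subset {S : Finset ℕ} (hx : ∀ k ∉ S, x k = 0) :
    lagF (E.filter (· ⊆ S)) x = lagF E x :=
  sum_filter_of_ne fun _ _ hne k hk => by_contra fun hkS => hne (prod_eq_zero hk (hx k hkS))

lemma lagF_eq_mul_lagF_link_add (E : Finset (Finset ℕ)) (i : ℕ) (x : ℕ → ℝ) :
    lagF E x = x i * lagF (link E i) x + lagF (E.filter (i ∉ ·)) x := by
  have hlink : lagF (link E i) x = ∑ e ∈ E.filter (i ∈ ·), ∏ k ∈ e.erase i, x k :=
    sum_image fun e he f hf => erase_injOn' i (mem_filter.1 he).2 (mem_filter.1 hf).2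
  rw [hlink]
  unfold lagF
  rw [mul_sum, ← sum_filter_add_sum_filter_not E (i ∈ ·)]
  congr 1
  exact sum_congr rfl fun e he => (mul_prod_erase e x (mem_filter.1 he).2).symm

lemma lagF_powersetCard_two (S : Finset ℕ) (x : ℕ → ℝ) :
    lagF (S.powersetCard 2) x = ((∑ i ∈ S, x i) ^ 2 - ∑ i ∈ S, x i ^ 2) / 2 := by
  induction S using Finset.induction_on with
  | empty => simp [lagF, powersetCard_eq_empty.2 (show #(∅ : Finset ℕ) < 2 by simp)]
  | @insert a S ha ih =>
    have hdisj : Disjoint (S.powersetCard 2) ((S.powersetCard 1).image (insert a)) :=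
      disjoint_left.2 fun e he he' => by
        obtain ⟨f, -, rfl⟩ := mem_image.1 he'
        exact ha ((mem_powersetCard.1 he).1 (mem_insert_self a f))
    have hinj : Set.InjOn (insert a) (S.powersetCard 1 : Set (Finset ℕ)) := fun e he f hf hef => by
      have hae : a ∉ e := fun h => ha ((mem_powersetCard.1 he).1 h)
      have haf : a ∉ f := fun h => ha ((mem_powersetCard.1 hf).1 h)
      simpa [erase_insert hae, erase_insert haf] using congrArg (erase · a) hef
    have hpairs : ∑ e ∈ S.powersetCard 1, ∏ i ∈ insert a e, x i = x a * ∑ i ∈ S, x i := by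
      rw [powersetCard_one, sum_map, mul_sum]
      refine sum_congr rfl fun i hi => ?_
      rw [Function.Embedding.coeFn_mk, prod_pair (ne_of_mem_of_not_mem hi ha).symm]
    rw [lagF, powersetCard_succ_insert ha, sum_union hdisj, sum_image hinj, hpairs, ← lagF, ih,
      sum_insert ha, sum_insert ha]
    ring

lemma lagF_le_lagF_powersetCard {r : ℕ} {S : Finset ℕ} (hE : ∀ e ∈ E, e.card = r)
    (hx₀ : ∀ k, 0 ≤ x k) (hS : ∀ k ∉ S, x k = 0) :
    lagF E x ≤ lagF (S.powersetCard r) x := by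
  rw [← lagF_filter_subset hS]
  refine lagF_mono (fun e he => ?_) hx₀
  obtain ⟨heE, heS⟩ := mem_filter.1 he
  exact mem_powersetCard.2 ⟨heS, hE e heE⟩

lemma lagF_powersetCard_two_le {S : Finset ℕ} {l : ℕ} (hS : ∑ i ∈ S, x i = 1)
    (hcard : S.card ≤ l) : lagF (S.powersetCard 2) x ≤ 1 / 2 * (1 - 1 / l) := by
  have hCS := sq_sum_le_card_mul_sum_sq (s := S) (f := x)
  rw [hS, one_pow] at hCS
  have hl : 1 ≤ l * ∑ i ∈ S, x i ^ 2 :=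
    hCS.trans (mul_le_mul_of_nonneg_right (by exact_mod_cast hcard)
      (sum_nonneg fun i _ => sq_nonneg (x i)))
  have hl₀ : (0 : ℝ) < l := Nat.cast_pos.2 (Nat.pos_of_ne_zero fun h => by norm_num [h] at hl)
  have hinv : 1 / (l : ℝ) ≤ ∑ i ∈ S, x i ^ 2 := by rwa [div_le_iff₀ hl₀, mul_comm]
  rw [lagF_powersetCard_two, hS]
  linarith

end Lagrangian

section Cliques

variable {E : Finset (Finset ℕ)} {r : ℕ} {S T : Finset ℕ}

lemma hasCliqueOn.mono (hT : hasCliqueOn E r T) (hST : S ⊆ T) : hasCliqueOn E r S :=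
  fun e he hcard => hT e (he.trans hST) hcard

lemma card_le_of_hasCliqueOn {U : Finset ℕ} {l : ℕ}
    (hmax : ¬ ∃ T ⊆ U, T.card = l + 1 ∧ hasCliqueOn E r T) (hTU : T ⊆ U)
    (hT : hasCliqueOn E r T) : T.card ≤ l := by
  by_contra! h
  obtain ⟨S, hST, hS⟩ := exists_subset_card_eq h
  exact hmax ⟨S, hST.trans hTU, hS, hT.mono hST⟩

lemma exists_pair_notMem_of_not_hasCliqueOn (h : ¬ hasCliqueOn E 2 S) :
    ∃ i ∈ S, ∃ j ∈ S, i ≠ j ∧ {i, j} ∉ E := by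
  simp only [hasCliqueOn, not_forall] at h
  obtain ⟨e, heS, hcard, he⟩ := h
  obtain ⟨i, j, hij, rfl⟩ := card_eq_two.1 hcard
  exact ⟨i, heS (mem_insert_self i {j}), j, heS (by simp), hij, he⟩

lemma notMem_of_pair_notMem (hE : ∀ e ∈ E, e.card = 2) {i j : ℕ} (hij : i ≠ j)
    (hp : {i, j} ∉ E) : ∀ e ∈ E, i ∈ e → j ∉ e := fun e he hi hj =>
  hp <| (eq_of_subset_of_card_le (insert_subset hi (singleton_subset_iff.2 hj))
    (by rw [hE e he, card_pair hij])) ▸ he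

end Cliques

section Weightings

variable {n : ℕ} {x : ℕ → ℝ} {i j k : ℕ}

noncomputable def weightSupport (n : ℕ) (x : ℕ → ℝ) : Finset ℕ := (Icc 1 n).filter fun i => x i ≠ 0

lemma weightSupport_subset : weightSupport n x ⊆ Icc 1 n := filter_subset _ _

lemma simplexOn.eq_zero_of_notMem_weightSupport (hx : simplexOn n x)
    (hk : k ∉ weightSupport n x) : x k = 0 := by
  by_cases hkn : k ∈ Icc 1 n
  · simpa [weightSupport, hkn] using hk
  · exact hx.2.2 k hkn

lemma simplexOn.sum_weightSupport (hx : simplexOn n x) : ∑ i ∈ weightSupport n x, x i = 1 :=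
  (sum_filter_ne_zero _).trans hx.2.1

def moveWeight (x : ℕ → ℝ) (j i : ℕ) : ℕ → ℝ :=
  Function.update (Function.update x i (x i + x j)) j 0

lemma moveWeight_apply_src : moveWeight x j i j = 0 := Function.update_self ..

lemma moveWeight_apply_dst (hij : i ≠ j) : moveWeight x j i i = x i + x j := by
  simp [moveWeight, hij]

lemma moveWeight_apply_of_ne (hki : k ≠ i) (hkj : k ≠ j) : moveWeight x j i k = x k := by
  simp [moveWeight, hki, hkj]

lemma lagF_moveWeight {E : Finset (Finset ℕ)} (hij : i ≠ j) (hE : ∀ e ∈ E, i ∈ e → j ∉ e) :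
    lagF E (moveWeight x j i) = lagF E x + x j * (lagF (link E i) x - lagF (link E j) x) := by
  set F := E.filter (i ∉ ·)
  have hlink : link F j = link E j := by
    unfold link
    congr 1
    ext e
    simp only [F, mem_filter]
    exact ⟨fun h => ⟨h.1.1, h.2⟩, fun h => ⟨⟨h.1, fun hi => hE e h.1 hi h.2⟩, h.2⟩⟩
  have hsplit : ∀ z, lagF E z =
      z i * lagF (link E i) z + (z j * lagF (link E j) z + lagF (F.filter (j ∉ ·)) z) := by
    intro z
    rw [lagF_eq_mul_lagF_link_add E i, lagF_eq_mul_lagF_link_add F j, hlink]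
  have hlink_i : lagF (link E i) (moveWeight x j i) = lagF (link E i) x := by
    refine lagF_congr fun e he k hk => moveWeight_apply_of_ne ?_ ?_
    all_goals
      obtain ⟨f, hf, rfl⟩ := mem_image.1 he
      obtain ⟨hfE, hif⟩ := mem_filter.1 hf
    · exact ne_of_mem_erase hk
    · exact ne_of_mem_of_not_mem (mem_of_mem_erase hk) (hE f hfE hif)
  have hrest : lagF (F.filter (j ∉ ·)) (moveWeight x j i) = lagF (F.filter (j ∉ ·)) x := by
    refine lagF_congr fun e he k hk => moveWeight_apply_of_ne ?_ ?_
    all_goals simp only [F, mem_filter] at he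
    · exact ne_of_mem_of_not_mem hk he.1.2
    · exact ne_of_mem_of_not_mem hk he.2
  rw [hsplit, hsplit x, moveWeight_apply_dst hij, moveWeight_apply_src, hlink_i, hrest]
  ring

lemma simplexOn_moveWeight (hx : simplexOn n x) (hi : i ∈ Icc 1 n) (hj : j ∈ Icc 1 n)
    (hij : i ≠ j) : simplexOn n (moveWeight x j i) := by
  have hsum : ∀ z : ℕ → ℝ,
      ∑ k ∈ Icc 1 n, z k = z i + z j + ∑ k ∈ ((Icc 1 n).erase j).erase i, z k := fun z => by
    rw [← add_sum_erase _ _ hj, ← add_sum_erase _ _ (mem_erase.2 ⟨hij, hi⟩)]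
    ring
  refine ⟨fun k => ?_, ?_, fun k hk => ?_⟩
  · rcases eq_or_ne k j with rfl | hkj
    · exact moveWeight_apply_src.ge
    rcases eq_or_ne k i with rfl | hki
    · exact (moveWeight_apply_dst hij).symm ▸ add_nonneg (hx.1 k) (hx.1 j)
    · exact (moveWeight_apply_of_ne hki hkj).symm ▸ hx.1 k
  · rw [hsum, moveWeight_apply_dst hij, moveWeight_apply_src, ← hx.2.1, hsum x,
      sum_congr rfl fun k hk => moveWeight_apply_of_ne (ne_of_mem_erase hk)
        (ne_of_mem_erase (mem_of_mem_erase hk))]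
    ring
  · rw [moveWeight_apply_of_ne (ne_of_mem_of_not_mem hi hk).symm
      (ne_of_mem_of_not_mem hj hk).symm]
    exact hx.2.2 k hk

lemma suppCard_moveWeight_lt (hi : i ∈ weightSupport n x) (hj : j ∈ weightSupport n x) :
    suppCard n (moveWeight x j i) < suppCard n x := by
  have hsub : weightSupport n (moveWeight x j i) ⊆ (weightSupport n x).erase j := fun k hk => by
    obtain ⟨hkn, hk0⟩ := mem_filter.1 hk
    have hkj : k ≠ j := fun h => hk0 (h ▸ moveWeight_apply_src)
    refine mem_erase.2 ⟨hkj, ?_⟩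
    rcases eq_or_ne k i with rfl | hki
    · exact hi
    · rw [moveWeight_apply_of_ne hki hkj] at hk0
      exact mem_filter.2 ⟨hkn, hk0⟩
  exact (card_le_card hsub).trans_lt (card_erase_lt_of_mem hj)

noncomputable def uniformOn (T : Finset ℕ) (i : ℕ) : ℝ := if i ∈ T then 1 / T.card else 0

lemma uniformOn_of_mem {T : Finset ℕ} {i : ℕ} (hi : i ∈ T) : uniformOn T i = 1 / T.card :=
  if_pos hi

lemma uniformOn_of_notMem {T : Finset ℕ} {i : ℕ} (hi : i ∉ T) : uniformOn T i = 0 :=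
  if_neg hi

lemma sum_uniformOn {T : Finset ℕ} (hT : T.Nonempty) : ∑ i ∈ T, uniformOn T i = 1 := by
  rw [sum_congr rfl fun i hi => uniformOn_of_mem hi, sum_const, nsmul_eq_mul]
  field_simp [hT.card_pos.ne']

lemma simplexOn_uniformOn {T : Finset ℕ} (hTn : T ⊆ Icc 1 n) (hT : T.Nonempty) :
    simplexOn n (uniformOn T) := by
  refine ⟨fun i => ?_, ?_, fun i hi => uniformOn_of_notMem fun h => hi (hTn h)⟩
  · unfold uniformOn
    split_ifs <;> positivity
  · rw [← sum_subset hTn fun i _ hi => uniformOn_of_notMem hi, sum_uniformOn hT]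

end Weightings

section Bounds

variable {n l : ℕ} {E : Finset (Finset ℕ)} {x : ℕ → ℝ}

lemma lagF_le_of_suppCard_le (hE : ∀ e ∈ E, e.card = 2) (hx : simplexOn n x)
    (hcard : suppCard n x ≤ l) : lagF E x ≤ 1 / 2 * (1 - 1 / l) :=
  (lagF_le_lagF_powersetCard hE hx.1 fun _ => hx.eq_zero_of_notMem_weightSupport).trans
    (lagF_powersetCard_two_le hx.sum_weightSupport hcard)

lemma exists_lagF_le_of_not_hasCliqueOn (hE : ∀ e ∈ E, e.card = 2) (hx : simplexOn n x)
    (hS : ¬ hasCliqueOn E 2 (weightSupport n x)) :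
    ∃ y, simplexOn n y ∧ suppCard n y < suppCard n x ∧ lagF E x ≤ lagF E y := by
  have hmove : ∀ i ∈ weightSupport n x, ∀ j ∈ weightSupport n x, i ≠ j → {i, j} ∉ E →
      lagF (link E j) x ≤ lagF (link E i) x →
      ∃ y, simplexOn n y ∧ suppCard n y < suppCard n x ∧ lagF E x ≤ lagF E y := by
    intro i hi j hj hij hp hlink
    refine ⟨moveWeight x j i, simplexOn_moveWeight hx (weightSupport_subset hi)
      (weightSupport_subset hj) hij, suppCard_moveWeight_lt hi hj, ?_⟩
    rw [lagF_moveWeight hij (notMem_of_pair_notMem hE hij hp)]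
    exact le_add_of_nonneg_right (mul_nonneg (hx.1 j) (sub_nonneg.2 hlink))
  obtain ⟨a, ha, b, hb, hab, hp⟩ := exists_pair_notMem_of_not_hasCliqueOn hS
  rcases le_total (lagF (link E a) x) (lagF (link E b) x) with h | h
  · exact hmove b hb a ha hab.symm (by rwa [pair_comm]) h
  · exact hmove a ha b hb hab hp h

lemma lagF_le_of_forall_hasCliqueOn_card_le (hE : ∀ e ∈ E, e.card = 2)
    (hmax : ∀ T ⊆ Icc 1 n, hasCliqueOn E 2 T → T.card ≤ l) (hx : simplexOn n x) :
    lagF E x ≤ 1 / 2 * (1 - 1 / l) := by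
  induction hm : suppCard n x using Nat.strong_induction_on generalizing x with
  | _ m ih =>
    by_cases hS : hasCliqueOn E 2 (weightSupport n x)
    · exact lagF_le_of_suppCard_le hE hx (hmax _ weightSupport_subset hS)
    · obtain ⟨y, hy, hlt, hle⟩ := exists_lagF_le_of_not_hasCliqueOn hE hx hS
      exact hle.trans (ih _ (hm ▸ hlt) hy rfl)

lemma lagF_uniformOn {T : Finset ℕ} (hE : ∀ e ∈ E, e.card = 2) (hT : hasCliqueOn E 2 T)
    (hne : T.Nonempty) : lagF E (uniformOn T) = 1 / 2 * (1 - 1 / T.card) := by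
  have hfilter : E.filter (· ⊆ T) = T.powersetCard 2 := by
    ext e
    rw [mem_filter, mem_powersetCard]
    exact ⟨fun h => ⟨h.2, hE e h.1⟩, fun h => ⟨hT e h.1 h.2, h.1⟩⟩
  have hsq : ∑ i ∈ T, uniformOn T i ^ 2 = 1 / T.card := by
    rw [sum_congr rfl fun i hi => by rw [uniformOn_of_mem hi], sum_const, nsmul_eq_mul]
    field_simp [hne.card_pos.ne']
  rw [← lagF_filter_subset fun k hk => uniformOn_of_notMem hk, hfilter, lagF_powersetCard_two,
    sum_uniformOn hne, hsq]
  ring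

lemma lagr_eq_of_largest_clique {T : Finset ℕ} (hE : ∀ e ∈ E, e.card = 2) (hTn : T ⊆ Icc 1 n)
    (hTl : T.card = l) (hl : 1 ≤ l) (hT : hasCliqueOn E 2 T)
    (hmax : ∀ T ⊆ Icc 1 n, hasCliqueOn E 2 T → T.card ≤ l) :
    lagr n E = 1 / 2 * (1 - 1 / l) := by
  have hne : T.Nonempty := card_pos.1 (hTl ▸ hl)
  refine IsGreatest.csSup_eq ⟨⟨uniformOn T, simplexOn_uniformOn hTn hne, ?_⟩, ?_⟩
  · rw [lagF_uniformOn hE hT hne, hTl]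
  · rintro _ ⟨x, hx, rfl⟩
    exact lagF_le_of_forall_hasCliqueOn_card_le hE hmax hx

end Bounds

theorem motzkin_straus (n l : ℕ) (E : Finset (Finset ℕ))
    (hG : isRGraph 2 n E) (hl : 1 ≤ l)
    (hclique : ∃ T ⊆ Finset.Icc 1 n, T.card = l ∧ hasCliqueOn E 2 T)
    (hmax : ¬ ∃ T ⊆ Finset.Icc 1 n, T.card = l + 1 ∧ hasCliqueOn E 2 T) :
    lagr n E = lagr l (completeR 2 l) ∧
      lagr n E = (1 / 2 : ℝ) * (1 - 1 / (l : ℝ)) := by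
  obtain ⟨T, hTn, hTl, hT⟩ := hclique
  have hE : lagr n E = 1 / 2 * (1 - 1 / l) :=
    lagr_eq_of_largest_clique (fun e he => (hG e he).1) hTn hTl hl hT
      fun _ hS hSc => card_le_of_hasCliqueOn hmax hS hSc
  have hK : lagr l (completeR 2 l) = 1 / 2 * (1 - 1 / l) :=
    lagr_eq_of_largest_clique (fun e he => (mem_powersetCard.1 he).2) subset_rfl
      (Nat.card_Icc 1 l) hl (fun e he hc => mem_powersetCard.2 ⟨he, hc⟩)
      fun _ hS _ => (card_le_card hS).trans (Nat.card_Icc 1 l).le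
  exact ⟨hE.trans hK.symm, hE⟩
end

section
/- There exists a left-compressed $r$-uniform hypergraph $G$ with $m$ edges such that $\lambda(G) = \lambda_m^r$, where $\lambda_m^r$ is the maximum Lagrangian over all $r$-graphs with $m$ edges. -/
open Finset

/-!
Compressing an `r`-graph `E` along a pair `i < j`, i.e. UV-compressing with `u = {i}` and
`v = {j}`, keeps the number of edges and does not decrease the Lagrangian: for a weighting with
`x i ≥ x j` every moved edge gains weight, and if `x i < x j` one swaps the two weights, which
replaces `E` by its mirror image under `i ↔ j`, a family with the same compression.

An `r`-graph with `m` edges spans at most `r * m` vertices, so after relabelling it lives on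
`[r * m + 1]`. Among the finitely many `m`-edge `r`-graphs there, take a maximizer of the
Lagrangian with least total vertex-label sum. A nontrivial compression would lower that sum, so the maximizer is closed under
all shifts `B ↦ B - b + a` with `a < b`; such a family is left-compressed, because a set `A`
below `B` is reached from `B` by repeatedly shifting the first entry in which the two differ.
-/

open scoped FinsetFamily

namespace simplexOn

variable {n : ℕ} {x : ℕ → ℝ}

lemma le_one (hx : simplexOn n x) (i : ℕ) : x i ≤ 1 := by
  by_cases hi : i ∈ Icc 1 n
  · rw [← hx.2.1]
    exact single_le_sum (fun j _ => hx.1 j) hi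
  · rw [hx.2.2 i hi]
    exact zero_le_one

lemma comp_swap {i j : ℕ} (hi : i ∈ Icc 1 n) (hj : j ∈ Icc 1 n) (hx : simplexOn n x) :
    simplexOn n (x ∘ Equiv.swap i j) := by
  refine ⟨fun k => hx.1 _, ?_, fun k hk => ?_⟩
  · rw [← hx.2.1]
    refine Equiv.Perm.sum_comp _ _ x fun k hk => ?_
    obtain ⟨-, rfl | rfl⟩ := Equiv.swap_apply_ne_self_iff.1 hk <;> assumption
  · rw [Function.comp_apply, Equiv.swap_apply_of_ne_of_ne (by rintro rfl; exact hk hi)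
      (by rintro rfl; exact hk hj)]
    exact hx.2.2 k hk

end simplexOn

lemma lagF_nonneg {E : Finset (Finset ℕ)} {x : ℕ → ℝ} (hx : ∀ i, 0 ≤ x i) : 0 ≤ lagF E x :=
  sum_nonneg fun _ _ => prod_nonneg fun i _ => hx i

lemma lagF_le_card {n : ℕ} {E : Finset (Finset ℕ)} {x : ℕ → ℝ} (hx : simplexOn n x) :
    lagF E x ≤ E.card := by
  calc lagF E x ≤ ∑ _e ∈ E, (1 : ℝ) :=
        sum_le_sum fun e _ => prod_le_one (fun i _ => hx.1 i) fun i _ => hx.le_one i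
    _ = E.card := by simp

lemma lagF_le_lagr {n : ℕ} {E : Finset (Finset ℕ)} {x : ℕ → ℝ} (hx : simplexOn n x) :
    lagF E x ≤ lagr n E :=
  le_csSup ⟨E.card, by rintro _ ⟨y, hy, rfl⟩; exact lagF_le_card hy⟩ ⟨x, hx, rfl⟩

lemma lagr_nonneg (n : ℕ) (E : Finset (Finset ℕ)) : 0 ≤ lagr n E :=
  Real.sSup_nonneg <| by rintro _ ⟨x, hx, rfl⟩; exact lagF_nonneg hx.1

lemma lagr_le_lagr_of_forall_exists {n₁ n₂ : ℕ} {E₁ E₂ : Finset (Finset ℕ)}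
    (h : ∀ x, simplexOn n₁ x → ∃ y, simplexOn n₂ y ∧ lagF E₁ x ≤ lagF E₂ y) :
    lagr n₁ E₁ ≤ lagr n₂ E₂ := by
  refine Real.sSup_le ?_ (lagr_nonneg n₂ E₂)
  rintro _ ⟨x, hx, rfl⟩
  obtain ⟨y, hy, hxy⟩ := h x hx
  exact hxy.trans (lagF_le_lagr hy)

lemma lagF_map_swap (i j : ℕ) (E : Finset (Finset ℕ)) (x : ℕ → ℝ) :
    lagF (E.map (Equiv.swap i j).finsetCongr.toEmbedding) (x ∘ Equiv.swap i j) = lagF E x := by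
  simp [lagF, Equiv.finsetCongr_apply, prod_map]

namespace UV

section

variable {α M : Type*} [GeneralizedBooleanAlgebra α] [DecidableRel (@Disjoint α _ _)]
  [DecidableLE α] {s : Finset α} {u v : α}

theorem compress_le_sup (u v a : α) : compress u v a ≤ a ⊔ u := by
  unfold compress
  split_ifs
  exacts [sdiff_le, le_sup_left]

variable [DecidableEq α]

theorem compression_eq_self_of_forall (h : ∀ a ∈ s, compress u v a ∈ s) : 𝓒 u v s = s := by
  ext a
  rw [mem_compression]
  constructor
  · rintro (⟨ha, -⟩ | ⟨-, b, hb, rfl⟩)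
    exacts [ha, h b hb]
  · exact fun ha => Or.inl ⟨ha, h a ha⟩

theorem sum_compression [AddCommMonoid M] (f : α → M) :
    ∑ a ∈ 𝓒 u v s, f a = ∑ a ∈ s, if compress u v a ∈ s then f a else f (compress u v a) := by
  rw [compression, sum_union compress_disjoint, filter_image, sum_image compress_injOn, sum_ite]

theorem sum_le_sum_compression [AddCommMonoid M] [PartialOrder M] [IsOrderedAddMonoid M]
    {f : α → M} (h : ∀ a ∈ s, f a ≤ f (compress u v a)) :
    ∑ a ∈ s, f a ≤ ∑ a ∈ 𝓒 u v s, f a := by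
  rw [sum_compression]
  refine sum_le_sum fun a ha => ?_
  split_ifs
  exacts [le_rfl, h a ha]

theorem sum_compression_lt [AddCommMonoid M] [PartialOrder M] [IsOrderedCancelAddMonoid M]
    {f : α → M} (hs : 𝓒 u v s ≠ s) (h : ∀ a, compress u v a ≠ a → f (compress u v a) < f a) :
    ∑ a ∈ 𝓒 u v s, f a < ∑ a ∈ s, f a := by
  obtain ⟨a, ha, has⟩ : ∃ a ∈ s, compress u v a ∉ s := by
    by_contra! h'
    exact hs (compression_eq_self_of_forall h')
  rw [sum_compression]
  refine sum_lt_sum (fun b hb => ?_) ⟨a, ha, ?_⟩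
  · split_ifs with hbs
    · exact le_rfl
    · exact (h b fun hb' => hbs (by rwa [hb'])).le
  · rw [if_neg has]
    exact h a fun ha' => has (by rwa [ha'])

end

theorem compression_subset_powersetCard {α : Type*} [DecidableEq α] {s : Finset (Finset α)}
    {u v T : Finset α} {r : ℕ} (hu : u ⊆ T) (huv : u.card = v.card) (hs : s ⊆ T.powersetCard r) :
    𝓒 u v s ⊆ T.powersetCard r := by
  intro a ha
  rcases mem_compression.1 ha with ⟨ha, -⟩ | ⟨-, b, hb, rfl⟩
  · exact hs ha
  · obtain ⟨hbT, hbr⟩ := mem_powersetCard.1 (hs hb)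
    exact mem_powersetCard.2 ⟨(compress_le_sup u v b).trans (union_subset hbT hu),
      (card_compress huv b).trans hbr⟩

section Singleton

variable {α : Type*} [DecidableEq α] {i j : α} {a : Finset α} {s : Finset (Finset α)}

lemma mem_finsetCongr_swap {b : α} :
    b ∈ (Equiv.swap i j).finsetCongr a ↔ Equiv.swap i j b ∈ a := by
  simp [Equiv.finsetCongr_apply, mem_map_equiv]

lemma finsetCongr_swap_of_mem_of_notMem (hj : j ∈ a) (hi : i ∉ a) :
    (Equiv.swap i j).finsetCongr a = insert i (a.erase j) := by
  ext b
  rw [mem_finsetCongr_swap, mem_insert, mem_erase]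
  rcases eq_or_ne b i with rfl | hbi
  · simp [hj]
  rcases eq_or_ne b j with rfl | hbj
  · simp [hi, hbi]
  · simp [Equiv.swap_apply_of_ne_of_ne hbi hbj, hbi, hbj]

lemma finsetCongr_swap_of_iff (h : i ∈ a ↔ j ∈ a) : (Equiv.swap i j).finsetCongr a = a := by
  ext b
  rw [mem_finsetCongr_swap]
  rcases eq_or_ne b i with rfl | hbi
  · simpa using h.symm
  rcases eq_or_ne b j with rfl | hbj
  · simpa using h
  · rw [Equiv.swap_apply_of_ne_of_ne hbi hbj]

lemma compress_singleton (i j : α) (a : Finset α) :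
    compress {i} {j} a = if j ∈ a ∧ i ∉ a then (Equiv.swap i j).finsetCongr a else a := by
  unfold compress
  simp only [disjoint_singleton_left, singleton_subset_iff, and_comm (a := i ∉ a)]
  split_ifs with h
  · rw [finsetCongr_swap_of_mem_of_notMem h.1 h.2, sup_eq_union, union_comm, ← insert_eq]
    have hij : i ≠ j := by rintro rfl; exact h.2 h.1
    ext b
    by_cases hb : b = j <;> simp_all [hij.symm]
  · rfl

lemma finsetCongr_swap_finsetCongr_swap (i j : α) (a : Finset α) :
    (Equiv.swap i j).finsetCongr ((Equiv.swap i j).finsetCongr a) = a := by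
  ext b
  simp

lemma mem_finsetCongr_swap_left : i ∈ (Equiv.swap i j).finsetCongr a ↔ j ∈ a := by
  simp

lemma mem_finsetCongr_swap_right : j ∈ (Equiv.swap i j).finsetCongr a ↔ i ∈ a := by
  simp

lemma mem_compression_singleton :
    a ∈ 𝓒 {i} {j} s ↔ if j ∈ a ∧ i ∉ a then a ∈ s ∧ (Equiv.swap i j).finsetCongr a ∈ s
      else a ∈ s ∨ (Equiv.swap i j).finsetCongr a ∈ s := by
  have h1 := finsetCongr_swap_of_iff (i := i) (j := j) (a := a)
  have h2 := finsetCongr_swap_finsetCongr_swap i j a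
  have h3 := mem_finsetCongr_swap_left (i := i) (j := j) (a := a)
  have h4 := mem_finsetCongr_swap_right (i := i) (j := j) (a := a)
  simp only [mem_compression, compress_singleton]
  constructor
  · rintro (⟨ha, hc⟩ | ⟨ha, b, hb, rfl⟩)
    · split_ifs at hc ⊢ <;> tauto
    · have h5 := mem_finsetCongr_swap_left (i := i) (j := j) (a := b)
      have h6 := mem_finsetCongr_swap_right (i := i) (j := j) (a := b)
      split_ifs at ha ⊢ with hb' hc' <;> simp_all
  · split_ifs with h
    · exact fun hs => Or.inl hs
    · rintro (ha | hc)
      · exact Or.inl ⟨ha, ha⟩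
      by_cases ha : a ∈ s
      · exact Or.inl ⟨ha, ha⟩
      refine Or.inr ⟨ha, _, hc, ?_⟩
      grind

lemma compression_finsetCongr_swap :
    𝓒 {i} {j} (s.map (Equiv.swap i j).finsetCongr.toEmbedding) = 𝓒 {i} {j} s := by
  ext a
  simp only [mem_compression_singleton, mem_map_equiv, Equiv.finsetCongr_symm, Equiv.symm_swap,
    finsetCongr_swap_finsetCongr_swap]
  split_ifs <;> tauto

lemma insert_erase_mem_of_isCompressed (hs : IsCompressed {i} {j} s) (ha : a ∈ s) (hj : j ∈ a)
    (hi : i ∉ a) : insert i (a.erase j) ∈ s := by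
  have := compress_mem_compression (u := {i}) (v := {j}) ha
  rwa [hs.eq, compress_singleton, if_pos ⟨hj, hi⟩, finsetCongr_swap_of_mem_of_notMem hj hi] at this

end Singleton

lemma sum_sum_compression_lt {i j : ℕ} (hij : i < j) {s : Finset (Finset ℕ)}
    (hs : 𝓒 {i} {j} s ≠ s) : ∑ a ∈ 𝓒 {i} {j} s, ∑ k ∈ a, k < ∑ a ∈ s, ∑ k ∈ a, k := by
  refine sum_compression_lt hs fun a ha => ?_
  rw [compress_singleton] at ha ⊢
  split_ifs at ha ⊢ with h
  · rw [finsetCongr_swap_of_mem_of_notMem h.1 h.2, sum_insert fun hi => h.2 (mem_of_mem_erase hi),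
      ← add_sum_erase a _ h.1]
    omega
  · exact absurd rfl ha

end UV

open UV

lemma lagF_le_lagF_compression {i j : ℕ} {E : Finset (Finset ℕ)} {x : ℕ → ℝ}
    (hx : ∀ k, 0 ≤ x k) (hxij : x j ≤ x i) : lagF E x ≤ lagF (𝓒 {i} {j} E) x := by
  refine sum_le_sum_compression fun a _ => ?_
  by_cases h : j ∈ a ∧ i ∉ a
  · rw [compress_singleton, if_pos h, finsetCongr_swap_of_mem_of_notMem h.1 h.2,
      prod_insert fun hi => h.2 (mem_of_mem_erase hi), ← mul_prod_erase a x h.1]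
    exact mul_le_mul_of_nonneg_right hxij (prod_nonneg fun k _ => hx k)
  · rw [compress_singleton, if_neg h]

lemma lagr_le_lagr_compression {n i j : ℕ} (hi : i ∈ Icc 1 n) (E : Finset (Finset ℕ)) :
    lagr n E ≤ lagr n (𝓒 {i} {j} E) := by
  refine lagr_le_lagr_of_forall_exists fun x hx => ?_
  by_cases hxij : x j ≤ x i
  · exact ⟨x, hx, lagF_le_lagF_compression hx.1 hxij⟩
  · -- swapping the weights of `i` and `j` mirrors `E`, which does not change its compression
    have hj : j ∈ Icc 1 n := by
      by_contra hj
      rw [hx.2.2 j hj] at hxij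
      exact hxij (hx.1 i)
    refine ⟨x ∘ Equiv.swap i j, hx.comp_swap hi hj, ?_⟩
    rw [← lagF_map_swap i j E x, ← compression_finsetCongr_swap]
    exact lagF_le_lagF_compression (fun k => hx.1 _) (by simpa using (not_le.1 hxij).le)

namespace Finset

variable {α : Type*} [LinearOrder α] {B : Finset α} {k : Fin B.card} {a : α}

lemma notMem_of_lt_orderEmbOfFin (hlt : ∀ l < k, B.orderEmbOfFin rfl l < a)
    (hak : a < B.orderEmbOfFin rfl k) : a ∉ B := by
  intro haB
  obtain ⟨l, hl⟩ : a ∈ Set.range (B.orderEmbOfFin rfl) := by rwa [range_orderEmbOfFin]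
  rcases lt_trichotomy l k with hlk | rfl | hlk
  · exact (hlt l hlk).ne hl
  · exact hak.ne' hl
  · exact (hak.trans ((B.orderEmbOfFin rfl).strictMono hlk)).ne' hl

lemma orderEmbOfFin_insert_erase (hlt : ∀ l < k, B.orderEmbOfFin rfl l < a)
    (hak : a < B.orderEmbOfFin rfl k) :
    ∃ h : (insert a (B.erase (B.orderEmbOfFin rfl k))).card = B.card,
      ⇑((insert a (B.erase (B.orderEmbOfFin rfl k))).orderEmbOfFin h) =
        Function.update (B.orderEmbOfFin rfl) k a := by
  set g := B.orderEmbOfFin rfl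
  have hcard : (insert a (B.erase (g k))).card = B.card := by
    rw [card_insert_of_notMem fun h => notMem_of_lt_orderEmbOfFin hlt hak (mem_of_mem_erase h),
      card_erase_add_one (orderEmbOfFin_mem _ _ _)]
  refine ⟨hcard, (orderEmbOfFin_unique hcard (fun l => ?_) fun l l' hll' => ?_).symm⟩
  · rcases eq_or_ne l k with rfl | hl
    · rw [Function.update_self]
      exact mem_insert_self _ _
    · rw [Function.update_of_ne hl]
      exact mem_insert_of_mem (mem_erase.2 ⟨g.injective.ne hl, orderEmbOfFin_mem _ _ _⟩)
  · rcases eq_or_ne l k with rfl | hl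
    · rw [Function.update_self, Function.update_of_ne hll'.ne']
      exact hak.trans (g.strictMono hll')
    rcases eq_or_ne l' k with rfl | hl'
    · rw [Function.update_self, Function.update_of_ne hl]
      exact hlt l hll'
    · rw [Function.update_of_ne hl, Function.update_of_ne hl']
      exact g.strictMono hll'

lemma sort_getD_eq_orderEmbOfFin [Zero α] (s : Finset α) {c : ℕ} (h : s.card = c) (k : Fin c) :
    (s.sort (· ≤ ·)).getD k 0 = s.orderEmbOfFin h k := by
  rw [List.getD_eq_getElem _ _ (by simp [h]), orderEmbOfFin_apply, Fin.getElem_fin]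

end Finset

lemma domBelow_iff {A B : Finset ℕ} {c : ℕ} (hA : A.card = c) (hB : B.card = c) :
    domBelow A B ↔ ∀ k, A.orderEmbOfFin hA k ≤ B.orderEmbOfFin hB k := by
  refine ⟨fun ⟨_, hle⟩ k => ?_, fun hle => ⟨hA.trans hB.symm, fun k => ?_⟩⟩
  · simpa only [sort_getD_eq_orderEmbOfFin A hA, sort_getD_eq_orderEmbOfFin B hB] using hle k
  · by_cases hk : k < c
    · have := hle ⟨k, hk⟩
      rwa [← sort_getD_eq_orderEmbOfFin A hA, ← sort_getD_eq_orderEmbOfFin B hB] at this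
    · rw [List.getD_eq_default _ _ (by simp; omega), List.getD_eq_default _ _ (by simp; omega)]

lemma exists_shift_of_domBelow {A B : Finset ℕ} (hAB : domBelow A B) (hne : A ≠ B) :
    ∃ a ∈ A, ∃ b ∈ B, a < b ∧ a ∉ B ∧ domBelow A (insert a (B.erase b)) := by
  have hc : A.card = B.card := hAB.1
  set f := A.orderEmbOfFin hc
  set g := B.orderEmbOfFin rfl
  have hle := (domBelow_iff hc rfl).1 hAB
  obtain ⟨k, hk, hmin⟩ : ∃ k, f k ≠ g k ∧ ∀ l < k, f l = g l := by
    have : {k | f k ≠ g k}.Nonempty := by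
      by_contra! H
      refine hne (coe_injective ?_)
      rw [← range_orderEmbOfFin A hc, ← range_orderEmbOfFin B rfl]
      exact congrArg Set.range (funext fun k => not_not.1 (Set.eq_empty_iff_forall_notMem.1 H k))
    obtain ⟨k, hk, hmin⟩ := wellFounded_lt.has_min _ this
    exact ⟨k, hk, fun l hl => not_not.1 fun h => hmin l h hl⟩
  have hak : f k < g k := (hle k).lt_of_ne hk
  have hlt : ∀ l < k, g l < f k := fun l hl => hmin l hl ▸ f.strictMono hl
  obtain ⟨hcard, hsort⟩ := orderEmbOfFin_insert_erase hlt hak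
  refine ⟨f k, orderEmbOfFin_mem _ _ _, g k, orderEmbOfFin_mem _ _ _, hak,
    notMem_of_lt_orderEmbOfFin hlt hak, (domBelow_iff hc hcard).2 fun l => ?_⟩
  rw [hsort]
  rcases eq_or_ne l k with rfl | hl
  · rw [Function.update_self]
  · rw [Function.update_of_ne hl]
    exact hle l

lemma leftCompressed_of_shift_mem {E : Finset (Finset ℕ)}
    (hE : ∀ a b, 1 ≤ a → a < b → ∀ B ∈ E, b ∈ B → a ∉ B → insert a (B.erase b) ∈ E) :
    leftCompressed E := by
  intro B hB A hA hAB
  induction hs : ∑ k ∈ B, k using Nat.strong_induction_on generalizing B with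
  | _ s ih =>
    obtain rfl | hne := eq_or_ne A B
    · exact hB
    obtain ⟨a, ha, b, hb, hab, haB, hAB'⟩ := exists_shift_of_domBelow hAB hne
    refine ih _ ?_ _ (hE a b (hA a ha) hab B hB hb haB) hAB' rfl
    rw [← hs, sum_insert fun h => haB (mem_of_mem_erase h), ← add_sum_erase B _ hb]
    omega

lemma Finset.exists_isMaxOn_forall_eq {α ι β : Type*} [LinearOrder β] {F : Finset α}
    (hF : F.Nonempty) (f : α → β) (g : α → ℕ) (T : ι → α → α) (P : ι → Prop)
    (hT : ∀ k, P k → ∀ a ∈ F, T k a ∈ F ∧ f a ≤ f (T k a) ∧ (T k a ≠ a → g (T k a) < g a)) :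
    ∃ a ∈ F, IsMaxOn f F a ∧ ∀ k, P k → T k a = a := by
  obtain ⟨a₀, ha₀, hmax₀⟩ := F.exists_max_image f hF
  obtain ⟨a, ha, hmin⟩ := (F.filter fun a => f a₀ ≤ f a).exists_min_image g ⟨a₀, by simpa⟩
  obtain ⟨haF, ha₀a⟩ := mem_filter.1 ha
  refine ⟨a, haF, fun b hb => (hmax₀ b hb).trans ha₀a, fun k hk => ?_⟩
  obtain ⟨hTa, hle, hlt⟩ := hT k hk a haF
  by_contra hne
  exact (hlt hne).not_ge (hmin _ (mem_filter.2 ⟨hTa, ha₀a.trans hle⟩))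

lemma Set.InjOn.finset_image {α β : Type*} [DecidableEq β] {φ : α → β} {V : Finset α}
    {E : Finset (Finset α)} (hφ : Set.InjOn φ V) (hEV : ∀ e ∈ E, e ⊆ V) :
    Set.InjOn (Finset.image φ) E := fun e₁ h₁ e₂ h₂ h => by
  rw [← Finset.coe_inj, ← hφ.image_eq_image_iff (Finset.coe_subset.2 (hEV e₁ h₁))
    (Finset.coe_subset.2 (hEV e₂ h₂)), ← Finset.coe_image, ← Finset.coe_image, h]

lemma Nat.le_add_choose_succ (n k : ℕ) : n ≤ (n + k).choose (k + 1) := by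
  induction k with
  | zero => simp
  | succ k ih =>
    rw [← add_assoc, Nat.choose_succ_succ']
    exact ih.trans (Nat.le_add_right _ _)

lemma le_card_completeR {r : ℕ} (hr : 1 ≤ r) (m : ℕ) : m ≤ (completeR r (r * m + 1)).card := by
  rw [completeR, card_powersetCard, Nat.card_Icc, Nat.add_sub_cancel]
  obtain ⟨k, rfl⟩ := Nat.exists_eq_add_of_le' hr
  rcases Nat.eq_zero_or_pos m with rfl | hm
  · exact Nat.zero_le _
  · exact (m.le_add_choose_succ k).trans (Nat.choose_le_choose _ (by nlinarith))

lemma mem_powersetCard_completeR {r n m : ℕ} {E : Finset (Finset ℕ)} :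
    E ∈ (completeR r n).powersetCard m ↔ isRGraph r n E ∧ E.card = m := by
  simp only [mem_powersetCard, completeR, isRGraph, subset_iff]
  exact and_congr_left' (forall₂_congr fun _ _ => and_comm)

lemma compression_mem_powersetCard_completeR {r n m i : ℕ} (hi : i ∈ Icc 1 n) (j : ℕ)
    {E : Finset (Finset ℕ)} (hE : E ∈ (completeR r n).powersetCard m) :
    𝓒 {i} {j} E ∈ (completeR r n).powersetCard m :=
  mem_powersetCard.2 ⟨compression_subset_powersetCard (singleton_subset_iff.2 hi) rfl
    (mem_powersetCard.1 hE).1, (card_compression _ _ _).trans (mem_powersetCard.1 hE).2⟩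

/-- The spare vertex `N + 1` carries the weight that does not sit on `V`. -/
lemma lagr_le_lagr_image {n N : ℕ} {E : Finset (Finset ℕ)} {V : Finset ℕ} {φ : ℕ → ℕ}
    (hV : V ⊆ Icc 1 n) (hEV : ∀ e ∈ E, e ⊆ V) (hφ : Set.InjOn φ V)
    (hφV : ∀ v ∈ V, φ v ∈ Icc 1 N) : lagr n E ≤ lagr (N + 1) (E.image (image φ)) := by
  refine lagr_le_lagr_of_forall_exists fun x hx => ?_
  set S := V.image φ
  have hψ : Set.LeftInvOn (Function.invFunOn φ V) φ V := hφ.leftInvOn_invFunOn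
  have hSN : ∀ u ∈ S, u ∈ Icc 1 (N + 1) ∧ u ≠ N + 1 := by
    simp only [S, mem_image]
    rintro _ ⟨v, hv, rfl⟩
    have := mem_Icc.1 (hφV v hv)
    exact ⟨mem_Icc.2 ⟨this.1, by omega⟩, by omega⟩
  have hxV : ∑ v ∈ V, x v ≤ 1 :=
    hx.2.1 ▸ sum_le_sum_of_subset_of_nonneg hV fun _ _ _ => hx.1 _
  set y : ℕ → ℝ := fun u =>
    if u ∈ S then x (Function.invFunOn φ V u) else if u = N + 1 then 1 - ∑ v ∈ V, x v else 0
  have hy : ∀ v ∈ V, y (φ v) = x v := fun v hv => by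
    simp only [y]
    rw [if_pos (mem_image_of_mem φ hv), hψ hv]
  have hy_simplex : simplexOn (N + 1) y := by
    refine ⟨fun u => ?_, ?_, fun u hu => ?_⟩
    · simp only [y]
      split_ifs
      exacts [hx.1 _, sub_nonneg.2 hxV, le_rfl]
    · have hN : N + 1 ∈ Icc 1 (N + 1) := mem_Icc.2 ⟨by omega, le_rfl⟩
      rw [sum_ite, filter_mem_eq_inter, inter_eq_right.2 fun u hu => (hSN u hu).1, sum_image hφ,
        sum_congr rfl fun v hv => congrArg x (hψ hv), sum_ite_eq',
        if_pos (mem_filter.2 ⟨hN, fun h => (hSN _ h).2 rfl⟩)]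
      ring
    · simp only [y]
      rw [if_neg fun h => hu (hSN u h).1, if_neg]
      rintro rfl
      exact hu (mem_Icc.2 ⟨by omega, le_rfl⟩)
  refine ⟨y, hy_simplex, le_of_eq ?_⟩
  rw [lagF, lagF, sum_image (hφ.finset_image hEV)]
  refine sum_congr rfl fun e he => ?_
  rw [prod_image (hφ.mono (coe_subset.2 (hEV e he)))]
  exact prod_congr rfl fun v hv => (hy v (hEV e he hv)).symm

lemma exists_mem_powersetCard_lagr_le {r n : ℕ} {E : Finset (Finset ℕ)} (hE : isRGraph r n E) :
    ∃ E' ∈ (completeR r (r * E.card + 1)).powersetCard E.card,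
      lagr n E ≤ lagr (r * E.card + 1) E' := by
  set V := E.biUnion id
  have hEV : ∀ e ∈ E, e ⊆ V := fun e he => subset_biUnion_of_mem id he
  have hVcard : V.card ≤ r * E.card := by
    refine card_biUnion_le.trans ?_
    rw [sum_congr rfl fun e he => ((hE e he).1 : (id e).card = r), sum_const, smul_eq_mul,
      mul_comm]
  obtain ⟨φ, hφV, hφ⟩ : ∃ φ : ℕ → ℕ, ↑V ⊆ φ ⁻¹' ↑(Icc 1 (r * E.card)) ∧ Set.InjOn φ V :=
    V.finite_toSet.exists_injOn_of_encard_le (by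
      rw [Set.encard_coe_eq_coe_finsetCard, Set.encard_coe_eq_coe_finsetCard, Nat.card_Icc]
      exact_mod_cast hVcard)
  refine ⟨E.image (image φ), mem_powersetCard_completeR.2 ⟨fun _ h => ?_, ?_⟩,
    lagr_le_lagr_image (biUnion_subset.2 fun e he => (hE e he).2) hEV hφ fun v hv => hφV hv⟩
  · obtain ⟨e, he, rfl⟩ := mem_image.1 h
    refine ⟨(card_image_of_injOn (hφ.mono (coe_subset.2 (hEV e he)))).trans (hE e he).1, ?_⟩
    intro u hu
    obtain ⟨v, hv, rfl⟩ := mem_image.1 hu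
    have : φ v ∈ Icc 1 (r * E.card) := hφV (hEV e he hv)
    rw [mem_Icc] at this
    exact mem_Icc.2 ⟨this.1, by omega⟩
  · exact card_image_of_injOn (hφ.finset_image hEV)

theorem exists_leftCompressed_maximizer (r m : ℕ) (hr : 1 ≤ r) :
    ∃ (n : ℕ) (E : Finset (Finset ℕ)), isRGraph r n E ∧ E.card = m ∧ leftCompressed E ∧
      ∀ (n' : ℕ) (E' : Finset (Finset ℕ)),
        isRGraph r n' E' → E'.card = m → lagr n' E' ≤ lagr n E := by
  obtain ⟨E, hEF, hEmax, hEfix⟩ := exists_isMaxOn_forall_eq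
    (powersetCard_nonempty.2 (le_card_completeR hr m)) (lagr (r * m + 1))
    (fun E => ∑ e ∈ E, ∑ k ∈ e, k) (fun (p : ℕ × ℕ) E => 𝓒 {p.1} {p.2} E)
    (fun p => p.1 ∈ Icc 1 (r * m + 1) ∧ p.1 < p.2) fun p hp E hE =>
      ⟨compression_mem_powersetCard_completeR hp.1 p.2 hE, lagr_le_lagr_compression hp.1 E,
        sum_sum_compression_lt hp.2⟩
  obtain ⟨hEr, hEm⟩ := mem_powersetCard_completeR.1 hEF
  refine ⟨r * m + 1, E, hEr, hEm, leftCompressed_of_shift_mem fun a b ha hab B hB hbB haB => ?_,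
    fun n' E' hE' hm => ?_⟩
  · have hbN := (mem_Icc.1 ((hEr B hB).2 hbB)).2
    exact insert_erase_mem_of_isCompressed (hEfix (a, b) ⟨mem_Icc.2 ⟨ha, by omega⟩, hab⟩)
      hB hbB haB
  · obtain ⟨E'', hE''F, hle⟩ := exists_mem_powersetCard_lagr_le hE'
    rw [hm] at hE''F hle
    exact hle.trans (hEmax hE''F)
end

section
/- Let $G$ be a left-compressed 3-graph on vertex set $[l]$ with $m$ edges where $\binom{l-1}{3} \le m \le \binom{l-1}{3} + \binom{l-2}{2}$, containing a clique of order $l-1$. If $|E_{(l-1)l}| > |[l-2]^{(2)} \setminus E_l|$, then $m > \binom{l-1}{3} + \binom{l-2}{2}$, a contradiction; hence $|E_{(l-1)l}| \le |[l-2]^{(2)} \setminus E_l|$, i.e., there exists an injection from $E_{(l-1)l}$ into $[l-2]^{(2)} \setminus E_l$. -/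
open Finset

/-!
Left-compression lets us slide the `(l-1)`-clique down onto `[l-1]`, so all `C(l-1,3)` triples
of `[l-1]` are edges and the edge bound leaves at most `C(l-2,2)` edges through `l`, i.e. members
of the link `E_l`. Inserting `l-1` maps `E_{(l-1)l}` injectively into the members of `E_l`
containing `l-1`; all other members of `E_l` lie in `[l-2]^(2)`, whence the bound.
-/

theorem Finset.sort_image_of_strictMonoOn {α β : Type*} [LinearOrder α] [LinearOrder β]
    {f : α → β} {s : Finset α} (hf : StrictMonoOn f s) :
    (s.image f).sort = s.sort.map f := by
  rw [sort, image_val_of_injOn hf.injOn]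
  exact (Multiset.map_sort f s.val _ _ fun a ha b hb => (hf.le_iff_le ha hb).symm).symm

theorem domBelow_image {f : ℕ → ℕ} {A : Finset ℕ} (hf : StrictMonoOn f A)
    (hle : ∀ a ∈ A, a ≤ f a) : domBelow A (A.image f) := by
  refine ⟨(card_image_of_injOn hf.injOn).symm, fun k => ?_⟩
  rw [sort_image_of_strictMonoOn hf]
  by_cases hk : k < A.sort.length
  · rw [List.getD_eq_getElem _ _ hk, List.getD_eq_getElem _ _ (by simpa using hk),
      List.getElem_map]
    exact hle _ ((mem_sort _).1 (List.getElem_mem hk))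
  · rw [List.getD_eq_default _ _ (by omega), List.getD_eq_default _ _ (by simpa using hk)]

theorem leftCompressed.powersetCard_Icc_subset {E : Finset (Finset ℕ)} (hlc : leftCompressed E)
    {T : Finset ℕ} (hT0 : 0 ∉ T) {r : ℕ} (hT : hasCliqueOn E r T) :
    (Icc 1 T.card).powersetCard r ⊆ E := by
  -- `f k` is the `k`-th smallest element of `{0} ∪ T`, so `f` maps `[|T|]` increasingly into `T`.
  set f := Nat.nth (· ∈ insert 0 T)
  have hfin : (Set.ofPred (· ∈ insert 0 T)).Finite := (insert 0 T).finite_toSet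
  have hcard : hfin.toFinset.card = T.card + 1 := by
    rw [show hfin.toFinset = insert 0 T by ext; simp, card_insert_of_notMem hT0]
  have hmono : StrictMonoOn f (Set.Iio (T.card + 1)) := hcard ▸ Nat.nth_strictMonoOn hfin
  intro A hA
  obtain ⟨hAsub, hAcard⟩ := mem_powersetCard.1 hA
  have hA_lt (a : ℕ) (ha : a ∈ A) : a < T.card + 1 := by have := mem_Icc.1 (hAsub ha); omega
  have hfT (a : ℕ) (ha : a ∈ A) : f a ∈ T := by
    have hmem : f a ∈ insert 0 T := Nat.nth_mem_of_lt_card hfin (hcard ▸ hA_lt a ha)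
    have hpos : f 0 < f a := hmono (by simp) (hA_lt a ha) (mem_Icc.1 (hAsub ha)).1
    exact (mem_insert.1 hmem).resolve_left (by omega)
  have himage : A.image f ∈ E := by
    refine hT _ (image_subset_iff.2 hfT) ?_
    rw [card_image_of_injOn (hmono.injOn.mono fun a ha => hA_lt a ha), hAcard]
  refine hlc _ himage A (fun a ha => (mem_Icc.1 (hAsub ha)).1) (domBelow_image ?_ ?_)
  · exact hmono.mono fun a ha => hA_lt a ha
  · exact fun a ha => Nat.le_nth fun _ => hcard ▸ hA_lt a ha

section Links

variable {E : Finset (Finset ℕ)}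

theorem card_link_eq_card_filter_mem (E : Finset (Finset ℕ)) (i : ℕ) :
    (link E i).card = (E.filter (i ∈ ·)).card := by
  refine card_image_of_injOn fun e he f hf hef => ?_
  rw [← insert_erase (mem_filter.1 he).2, ← insert_erase (mem_filter.1 hf).2]
  exact congrArg (insert i) hef

theorem card_link_add_card_le {K : Finset (Finset ℕ)} {i : ℕ} (hK : K ⊆ E)
    (hi : ∀ A ∈ K, i ∉ A) : (link E i).card + K.card ≤ E.card := by
  have hKsub : K ⊆ E.filter (i ∉ ·) := fun A hA => mem_filter.2 ⟨hK hA, hi A hA⟩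
  rw [card_link_eq_card_filter_mem, ← card_filter_add_card_filter_not (s := E) (i ∈ ·)]
  exact Nat.add_le_add_left (card_le_card hKsub) _

theorem link2_eq_image_erase {i j : ℕ} (hij : i ≠ j) :
    link2 E i j = ((link E j).filter (i ∈ ·)).image (·.erase i) := by
  simp only [link2, link, filter_image, image_image]
  congr 1
  · funext e
    exact erase_right_comm
  · ext e
    simp only [mem_filter, mem_erase]
    tauto

theorem link2_eq_empty_of_notMem {r n i j : ℕ} (hG : isRGraph r n E) (hj : j ∉ Icc 1 n) :
    link2 E i j = ∅ := by
  simp only [link2, image_eq_empty, filter_eq_empty_iff]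
  exact fun e he hij => hj ((hG e he).2 hij.2)

theorem card_link2_le_card_sdiff_link {i j : ℕ} (hij : i ≠ j) {P : Finset (Finset ℕ)}
    (hP : ∀ A ∈ P, i ∉ A) (hlink : (link E j).card ≤ P.card) :
    (link2 E i j).card ≤ (P \ link E j).card := by
  have hinter : P ∩ link E j ⊆ (link E j).filter (i ∉ ·) := fun A hA =>
    mem_filter.2 ⟨(mem_inter.1 hA).2, hP A (mem_inter.1 hA).1⟩
  have hinter_le := card_le_card hinter
  have hsplit := card_filter_add_card_filter_not (s := link E j) (i ∈ ·)
  have hsdiff := card_sdiff_add_card_inter P (link E j)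
  have himage := card_image_le (s := (link E j).filter (i ∈ ·)) (f := (·.erase i))
  rw [link2_eq_image_erase hij]
  omega

end Links

theorem pairlink_card_le_general (l m : ℕ) (E : Finset (Finset ℕ))
    (hG : isRGraph 3 l E) (hlc : leftCompressed E) (hcard : E.card = m)
    (hm2 : m ≤ (l - 1).choose 3 + (l - 2).choose 2)
    (hclq : ∃ T ⊆ Finset.Icc 1 l, T.card = l - 1 ∧ hasCliqueOn E 3 T) :
    (link2 E (l - 1) l).card ≤
      (((Finset.Icc 1 (l - 2)).powersetCard 2) \ link E l).card := by
  obtain rfl | hl := Nat.eq_zero_or_pos l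
  -- here `l - 1 = l = 0`, a vertex outside the graph
  · simp [link2_eq_empty_of_notMem hG (j := 0) (by simp)]
  obtain ⟨T, hTsub, hTcard, hTclq⟩ := hclq
  have hK : (Icc 1 (l - 1)).powersetCard 3 ⊆ E := by
    rw [← hTcard]
    exact hlc.powersetCard_Icc_subset (fun h => by simpa using hTsub h) hTclq
  have hlink := card_link_add_card_le (i := l) hK fun A hA hlA => by
    have := mem_Icc.1 ((mem_powersetCard.1 hA).1 hlA)
    omega
  refine card_link2_le_card_sdiff_link (by omega) (fun A hA hlA => ?_) ?_
  · have := mem_Icc.1 ((mem_powersetCard.1 hA).1 hlA)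
    omega
  · simp only [card_powersetCard, Nat.card_Icc, Nat.add_sub_cancel] at hlink ⊢
    omega

theorem pairlink_card_le (l m : ℕ) (E : Finset (Finset ℕ))
    (hG : isRGraph 3 l E) (hlc : leftCompressed E) (hcard : E.card = m)
    (hm1 : (l - 1).choose 3 ≤ m)
    (hm2 : m ≤ (l - 1).choose 3 + (l - 2).choose 2)
    (hclq : ∃ T ⊆ Finset.Icc 1 l, T.card = l - 1 ∧ hasCliqueOn E 3 T) :
    (link2 E (l - 1) l).card ≤
      (((Finset.Icc 1 (l - 2)).powersetCard 2) \ link E l).card :=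
  pairlink_card_le_general l m E hG hlc hcard hm2 hclq
end
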